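/- (a) If f, g ∈ 𝓕_n are monotone subtypes with O_f = O_g, then f∨g and f∧g are monotone subtypes. (b) If f ∈ 𝓕_m and g ∈ 𝓕_n are monotone subtypes and σ is a permutation of [m], then f∘σ, f*, f◁g, f⊗g and f⅋g are monotone subtypes. -/

import Mathlib

open Classical

namespace HOT

/-- Binary strings of length `n`, identified with `{0,1}^n`. -/
abbrev Str (n : ℕ) := Fin n → Bool

/-- The all-zeros string `θ`. -/
def theta (n : ℕ) : Str n := fun _ => false

/-- `𝓕_n`: boolean functions on `{0,1}^n` with `f(θ) = 1`. -/
def Fcal (n : ℕ) : Set (Str n → Bool) := {f | f (theta n) = true}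

/-- The complement `f* = 1 - f + p_n`. -/
noncomputable def star {n : ℕ} (f : Str n → Bool) : Str n → Bool :=
  fun s => if s = theta n then true else !(f s)

/-- First block `s¹` of a string `s ∈ {0,1}^{m+n}`. -/
def fstStr {m n : ℕ} (s : Str (m + n)) : Str m := fun i => s (Fin.castAdd n i)

/-- Second block `s²` of a string `s ∈ {0,1}^{m+n}`. -/
def sndStr {m n : ℕ} (s : Str (m + n)) : Str n := fun j => s (Fin.natAdd m j)

/-- Tensor product `(f ⊗ g)(s) = f(s¹) · g(s²)`. -/
noncomputable def tensor {m n : ℕ} (f : Str m → Bool) (g : Str n → Bool) :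
    Str (m + n) → Bool :=
  fun s => f (fstStr s) && g (sndStr s)

/-- `f ⅋ g := (f* ⊗ g*)*`. -/
noncomputable def parr {m n : ℕ} (f : Str m → Bool) (g : Str n → Bool) :
    Str (m + n) → Bool :=
  star (tensor (star f) (star g))

/-- The causal product `f ◁ g` (`f` on the first `m` bits, `g` on the last `n` bits):
`(f ◁ g)(s) = f(s¹)` if `s¹ ≠ θ_m`, else `g(s²)`. -/
noncomputable def causalL {m n : ℕ} (f : Str m → Bool) (g : Str n → Bool) :
    Str (m + n) → Bool :=
  fun s => if fstStr s = theta m then g (sndStr s) else f (fstStr s)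

/-- The causal product `g ◁ f` (`f` on the first `m` bits, `g` on the last `n` bits):
`(g ◁ f)(s) = g(s²)` if `s² ≠ θ_n`, else `f(s¹)`. -/
noncomputable def causalR {m n : ℕ} (f : Str m → Bool) (g : Str n → Bool) :
    Str (m + n) → Bool :=
  fun s => if sndStr s = theta n then f (fstStr s) else g (sndStr s)

/-- `p_T(s) = 1` iff `s_i = 0` for all `i ∈ T`. -/
noncomputable def pSet {n : ℕ} (T : Set (Fin n)) : Str n → Bool :=
  fun s => decide (∀ i ∈ T, s i = false)

/-- The string `e^i` with `1` exactly in position `i`. -/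
def eStr {n : ℕ} (i : Fin n) : Str n := fun j => decide (j = i)

/-- The string `e^{i,j}` with `1` exactly in positions `i` and `j`. -/
def e2Str {n : ℕ} (i j : Fin n) : Str n := fun l => decide (l = i ∨ l = j)

/-- Input indices `I_f = {i : f(e^i) = 0}`. -/
def Iset {n : ℕ} (f : Str n → Bool) : Set (Fin n) := {i | f (eStr i) = false}

/-- Output indices `O_f = {j : f(e^j) = 1}`. -/
def Oset {n : ℕ} (f : Str n → Bool) : Set (Fin n) := {j | f (eStr j) = true}

/-- `f` is a subtype if `p_{I_f} ≤ f ≤ (p_{O_f})*` pointwise. -/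
def IsSubtype {n : ℕ} (f : Str n → Bool) : Prop :=
  pSet (Iset f) ≤ f ∧ f ≤ star (pSet (Oset f))

/-- The partial order `≤_O`: `s ≤_O t` iff `s_i ≤ t_i` for `i ∈ O` and `s_i ≥ t_i` for
`i ∉ O`. -/
def leO {n : ℕ} (O : Set (Fin n)) (s t : Str n) : Prop :=
  ∀ i, (i ∈ O → s i ≤ t i) ∧ (i ∉ O → t i ≤ s i)

/-- `f` is monotone (with respect to `≤_{O_f}`). -/
def MonotoneF {n : ℕ} (f : Str n → Bool) : Prop :=
  ∀ s t, leO (Oset f) s t → f s ≤ f t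

/-- The action of a permutation on strings: `σ(s)_i = s_{σ⁻¹(i)}`. -/
def permAct {n : ℕ} (σ : Equiv.Perm (Fin n)) (s : Str n) : Str n := fun i => s (σ⁻¹ i)

/-- `(f ∘ σ)(s) = f(σ(s))`. -/
def permComp {n : ℕ} (f : Str n → Bool) (σ : Equiv.Perm (Fin n)) : Str n → Bool :=
  fun s => f (permAct σ s)

/-- The inductively defined family `𝓣_n` of type functions. -/
inductive IsType : (n : ℕ) → (Str n → Bool) → Prop
  | one : IsType 1 (fun _ => true)
  | dual {n : ℕ} {f : Str n → Bool} : IsType n f → IsType n (star f)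
  | perm {n : ℕ} {f : Str n → Bool} (σ : Equiv.Perm (Fin n)) :
      IsType n f → IsType n (permComp f σ)
  | tens {m n : ℕ} {f : Str m → Bool} {g : Str n → Bool} :
      IsType m f → IsType n g → IsType (m + n) (tensor f g)

/-- Interpretation of a bit as an integer. -/
def toZ (b : Bool) : ℤ := (b.toNat : ℤ)

/-- `f` is a chain type: `f = Σ_{i=0}^N (-1)^i p_{S_i}` for a strictly increasing chain
`S_0 ⊊ ⋯ ⊊ S_N ⊆ [n]` with `N` even. -/
def IsChainType {n : ℕ} (f : Str n → Bool) : Prop :=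
  ∃ N : ℕ, Even N ∧ ∃ S : Fin (N + 1) → Set (Fin n), StrictMono S ∧
    ∀ s : Str n, toZ (f s) = ∑ i : Fin (N + 1), (-1 : ℤ) ^ (i : ℕ) * toZ (pSet (S i) s)

/-- The Möbius transform `f̂_T`. -/
noncomputable def mobius {n : ℕ} (f : Str n → Bool) (T : Set (Fin n)) : ℤ :=
  ∑ s : Str n, if ∀ j, j ∉ T → s j = true then
    (-1 : ℤ) ^ (∑ j : Fin n, if j ∈ T then (s j).toNat else 0) * toZ (f s)
  else 0

/-- The structure poset `𝓟_f = {T ⊆ [n] : f̂_T ≠ 0}`, ordered by inclusion. -/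
noncomputable def structPoset {n : ℕ} (f : Str n → Bool) : Set (Set (Fin n)) :=
  {T | mobius f T ≠ 0}

/-- The label set `L_T = T ∖ ⋃ {S ∈ 𝓟_f : S ⊊ T}`. -/
noncomputable def labels {n : ℕ} (f : Str n → Bool) (T : Set (Fin n)) : Set (Fin n) :=
  T \ ⋃₀ {S | S ∈ structPoset f ∧ S ⊂ T}

/-- The reduced structure poset `𝓟_f^0`: `∅` (if `∅ ∈ 𝓟_f`) together with all
`T ∈ 𝓟_f` with `L_T ≠ ∅`. -/
noncomputable def reducedPoset {n : ℕ} (f : Str n → Bool) : Set (Set (Fin n)) :=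
  {T | T ∈ structPoset f ∧ (T = ∅ ∨ labels f T ≠ ∅)}

/-- The rank `ρ_f(T)`: the length of a longest chain in `𝓟_f` with top element `T`
(this is the length of any maximal such chain in the graded poset `𝓟_f`). -/
noncomputable def rank {n : ℕ} (f : Str n → Bool) (T : Set (Fin n)) : ℕ :=
  sSup {k | ∃ c : Fin (k + 1) → Set (Fin n), StrictMono c ∧
    (∀ i, c i ∈ structPoset f) ∧ c (Fin.last k) = T}

/-- The rank `r(f)` of the whole poset `𝓟_f`: the common length of its maximal chains. -/
noncomputable def rk {n : ℕ} (f : Str n → Bool) : ℕ :=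
  sSup {k | ∃ c : Fin (k + 1) → Set (Fin n), StrictMono c ∧ ∀ i, c i ∈ structPoset f}

/-- `𝕋_i^f = {T ∈ 𝓟_f : i ∈ L_T}`. -/
noncomputable def Tset {n : ℕ} (f : Str n → Bool) (i : Fin n) : Set (Set (Fin n)) :=
  {T | T ∈ structPoset f ∧ i ∈ labels f T}

/-- The rank `r_f(i)` of an index: the common rank of elements of `𝕋_i^f`, or `r(f)+1`
if `𝕋_i^f = ∅` (a free output). -/
noncomputable def idxRank {n : ℕ} (f : Str n → Bool) (i : Fin n) : ℕ :=
  if (Tset f i).Nonempty then sSup (rank f '' Tset f i) else rk f + 1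

/-- `X` is the greatest lower bound of `S` and `T` in the poset `(P, ⊆)`. -/
def IsGLBIn {n : ℕ} (P : Set (Set (Fin n))) (S T X : Set (Fin n)) : Prop :=
  X ∈ P ∧ X ⊆ S ∧ X ⊆ T ∧ ∀ Y ∈ P, Y ⊆ S → Y ⊆ T → Y ⊆ X

/-- `X` is the least upper bound of `S` and `T` in the poset `(P, ⊆)`. -/
def IsLUBIn {n : ℕ} (P : Set (Set (Fin n))) (S T X : Set (Fin n)) : Prop :=
  X ∈ P ∧ S ⊆ X ∧ T ⊆ X ∧ ∀ Y ∈ P, S ⊆ Y → T ⊆ Y → X ⊆ Y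

/-- `S^↓`: the downset generated by `S` in `𝓟_f^0`. -/
noncomputable def downSet {n : ℕ} (f : Str n → Bool) (S : Set (Fin n)) :
    Set (Set (Fin n)) :=
  {X | X ∈ reducedPoset f ∧ X ⊆ S}

/-- `S^↑`: the upset generated by `S` in `𝓟_f^0`. -/
noncomputable def upSet {n : ℕ} (f : Str n → Bool) (S : Set (Fin n)) :
    Set (Set (Fin n)) :=
  {X | X ∈ reducedPoset f ∧ S ⊆ X}

/-- The pair rank `r_f(i,j)`: `max{ρ_f(S ∧ T) : S ∈ 𝕋_i^f, T ∈ 𝕋_j^f, S ∧ T exists in 𝓟_f}`;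
`-1` if this set is empty, unless `i` or `j` is a free output, in which case it is
`min{r_f(i), r_f(j)}`. -/
noncomputable def pairRank {n : ℕ} (f : Str n → Bool) (i j : Fin n) : ℤ :=
  if _h : ∃ r : ℤ, ∃ S ∈ Tset f i, ∃ T ∈ Tset f j, ∃ X, IsGLBIn (structPoset f) S T X ∧
      r = (rank f X : ℤ) then
    sSup {r : ℤ | ∃ S ∈ Tset f i, ∃ T ∈ Tset f j, ∃ X, IsGLBIn (structPoset f) S T X ∧
      r = (rank f X : ℤ)}
  else if Tset f i = ∅ ∨ Tset f j = ∅ then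
    min (idxRank f i : ℤ) (idxRank f j : ℤ)
  else -1

/-- Membership in the sublattice generated by a set `S`. -/
inductive InLatGen {α : Type*} [Lattice α] (S : Set α) : α → Prop
  | base {a : α} : a ∈ S → InLatGen S a
  | sup {a b : α} : InLatGen S a → InLatGen S b → InLatGen S (a ⊔ b)
  | inf {a b : α} : InLatGen S a → InLatGen S b → InLatGen S (a ⊓ b)

/-- For `s ≰_O θ`, `f_s` is the function with support `U_s ∪ U_θ` (w.r.t. `≤_O`). -/
noncomputable def fStr {n : ℕ} (O : Set (Fin n)) (s : Str n) : Str n → Bool :=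
  fun t => decide (leO O s t ∨ leO O (theta n) t)

/-- A string `s ∉ D_θ ∪ U_θ` is basic (for `≤_O`) if `s_j = 1` for exactly one `j ∈ O`
and `s_i = 0` for at most one `i ∈ I = Oᶜ`. -/
def IsBasic {n : ℕ} (O : Set (Fin n)) (s : Str n) : Prop :=
  ¬ leO O s (theta n) ∧ ¬ leO O (theta n) s ∧
  (∃! j, j ∈ O ∧ s j = true) ∧
  (∀ i i', i ∈ Oᶜ → i' ∈ Oᶜ → s i = false → s i' = false → i = i')

/-!
With respect to `≤_O` for `O = O_f`, being a subtype says exactly that `f = 1` on the up-set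
of `θ` and `f = 0` on the down-set of `θ` minus `θ`; for monotone `f` with `f θ = 1` the first
half is automatic. Each construction acts on output sets compatibly with `≤_O`: `∨` and `∧`
keep `O`, `σ` pulls it back, `*` complements it (which reverses `≤_O`), and `⊗`, `◁`
concatenate the output sets of the factors (for `⊗` because `f θ = g θ = 1`). Monotonicity and
vanishing below `θ` then transfer factor by factor; for `◁` the mixed cases, where only one
block is `θ`, are settled by the subtype bounds of `f`. Finally `⅋` is a composite of `*`
and `⊗`.
-/

variable {m n : ℕ}

lemma fstStr_theta : fstStr (theta (m + n)) = theta m := rfl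

lemma sndStr_theta : sndStr (theta (m + n)) = theta n := rfl

lemma eq_theta_iff_fstStr_sndStr {s : Str (m + n)} :
    s = theta (m + n) ↔ fstStr s = theta m ∧ sndStr s = theta n := by
  simp only [funext_iff, fstStr, sndStr, theta]
  exact Fin.forall_fin_add _

lemma permAct_eq_theta_iff {σ : Equiv.Perm (Fin n)} {s : Str n} :
    permAct σ s = theta n ↔ s = theta n := by
  simp only [funext_iff, permAct, theta]
  exact σ⁻¹.forall_congr_right (q := fun x => s x = false)

lemma eStr_ne_theta (i : Fin n) : eStr i ≠ theta n := fun h => by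
  simpa [eStr, theta] using congrFun h i

lemma fstStr_eStr_castAdd (i : Fin m) : fstStr (eStr (Fin.castAdd n i)) = eStr i := by
  funext k; simp [fstStr, eStr]

lemma sndStr_eStr_castAdd (i : Fin m) : sndStr (eStr (Fin.castAdd n i)) = theta n := by
  funext k; simp [sndStr, eStr, theta, Fin.ext_iff]; omega

lemma fstStr_eStr_natAdd (j : Fin n) : fstStr (eStr (Fin.natAdd m j)) = theta m := by
  funext k; simp [fstStr, eStr, theta, Fin.ext_iff]; omega

lemma sndStr_eStr_natAdd (j : Fin n) : sndStr (eStr (Fin.natAdd m j)) = eStr j := by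
  funext k; simp [sndStr, eStr]

lemma permAct_eStr (σ : Equiv.Perm (Fin n)) (i : Fin n) : permAct σ (eStr i) = eStr (σ i) := by
  funext j; simp [permAct, eStr, Equiv.symm_apply_eq]

section leO

variable {O : Set (Fin n)} {s t : Str n}

lemma theta_leO_iff : leO O (theta n) s ↔ ∀ i ∉ O, s i = false := by
  simp [leO, theta, Bool.le_iff_imp]

lemma leO_theta_iff : leO O s (theta n) ↔ ∀ i ∈ O, s i = false := by
  simp [leO, theta, Bool.le_iff_imp]

lemma leO_compl_iff : leO Oᶜ s t ↔ leO O t s := by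
  simp only [leO, Set.mem_compl_iff, not_not]
  exact forall_congr' fun _ => and_comm

lemma leO_permAct_iff {σ : Equiv.Perm (Fin n)} :
    leO O (permAct σ s) (permAct σ t) ↔ leO (σ ⁻¹' O) s t := by
  simp only [leO, permAct]
  exact σ⁻¹.forall_congr (by simp)

lemma leO_iff_fstStr_sndStr {O : Set (Fin (m + n))} {s t : Str (m + n)} :
    leO O s t ↔ leO (Fin.castAdd n ⁻¹' O) (fstStr s) (fstStr t) ∧
      leO (Fin.natAdd m ⁻¹' O) (sndStr s) (sndStr t) :=
  Fin.forall_fin_add _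

end leO

lemma Iset_eq_compl (f : Str n → Bool) : Iset f = (Oset f)ᶜ := by
  ext; simp [Iset, Oset]

lemma isSubtype_iff {f : Str n → Bool} :
    IsSubtype f ↔ (∀ s, leO (Oset f) (theta n) s → f s = true) ∧
      ∀ s, leO (Oset f) s (theta n) → s ≠ theta n → f s = false := by
  rw [IsSubtype, Iset_eq_compl]
  refine and_congr (forall_congr' fun s => ?_) (forall_congr' fun s => ?_)
  · simp [Bool.le_iff_imp, pSet, theta_leO_iff]
  · by_cases hs : s = theta n
    · simp [star, hs]
    · simp only [Bool.le_iff_imp, star, pSet, leO_theta_iff, hs, if_false]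
      cases f s <;> simp [hs]

lemma Oset_sup (f g : Str n → Bool) : Oset (f ⊔ g) = Oset f ∪ Oset g := by
  ext i; simp [Oset]

lemma Oset_inf (f g : Str n → Bool) : Oset (f ⊓ g) = Oset f ∩ Oset g := by
  ext i; simp [Oset]

lemma Oset_star (f : Str n → Bool) : Oset (star f) = (Oset f)ᶜ := by
  ext i; simp [Oset, star, eStr_ne_theta]

lemma Oset_permComp (f : Str n → Bool) (σ : Equiv.Perm (Fin n)) :
    Oset (permComp f σ) = σ ⁻¹' Oset f := by
  ext i; simp [Oset, permComp, permAct_eStr]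

section Products

variable {f : Str m → Bool} {g : Str n → Bool}

lemma castAdd_preimage_Oset_tensor (hg : g ∈ Fcal n) :
    Fin.castAdd n ⁻¹' Oset (tensor f g) = Oset f := by
  ext i
  simp [Oset, tensor, fstStr_eStr_castAdd, sndStr_eStr_castAdd, show g (theta n) = true from hg]

lemma natAdd_preimage_Oset_tensor (hf : f ∈ Fcal m) :
    Fin.natAdd m ⁻¹' Oset (tensor f g) = Oset g := by
  ext j
  simp [Oset, tensor, fstStr_eStr_natAdd, sndStr_eStr_natAdd, show f (theta m) = true from hf]

lemma castAdd_preimage_Oset_causalL : Fin.castAdd n ⁻¹' Oset (causalL f g) = Oset f := by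
  ext i
  simp [Oset, causalL, fstStr_eStr_castAdd, eStr_ne_theta]

lemma natAdd_preimage_Oset_causalL : Fin.natAdd m ⁻¹' Oset (causalL f g) = Oset g := by
  ext j
  simp [Oset, causalL, fstStr_eStr_natAdd, sndStr_eStr_natAdd]

lemma leO_Oset_tensor_iff (hf : f ∈ Fcal m) (hg : g ∈ Fcal n) {s t : Str (m + n)} :
    leO (Oset (tensor f g)) s t ↔
      leO (Oset f) (fstStr s) (fstStr t) ∧ leO (Oset g) (sndStr s) (sndStr t) := by
  rw [leO_iff_fstStr_sndStr, castAdd_preimage_Oset_tensor hg, natAdd_preimage_Oset_tensor hf]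

lemma leO_Oset_causalL_iff {s t : Str (m + n)} :
    leO (Oset (causalL f g)) s t ↔
      leO (Oset f) (fstStr s) (fstStr t) ∧ leO (Oset g) (sndStr s) (sndStr t) := by
  rw [leO_iff_fstStr_sndStr, castAdd_preimage_Oset_causalL, natAdd_preimage_Oset_causalL]

end Products

structure IsMonotoneSubtype (f : Str n → Bool) : Prop where
  mem_Fcal : f ∈ Fcal n
  isSubtype : IsSubtype f
  monotoneF : MonotoneF f

namespace IsMonotoneSubtype

section Unary

variable {f g : Str n → Bool} {s : Str n}

lemma eq_true_of_theta_leO (hf : IsMonotoneSubtype f) (hs : leO (Oset f) (theta n) s) :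
    f s = true :=
  (isSubtype_iff.1 hf.isSubtype).1 s hs

lemma eq_false_of_leO_theta (hf : IsMonotoneSubtype f) (hs : leO (Oset f) s (theta n))
    (hne : s ≠ theta n) : f s = false :=
  (isSubtype_iff.1 hf.isSubtype).2 s hs hne

lemma of_monotoneF (h0 : f ∈ Fcal n) (hmono : MonotoneF f)
    (h : ∀ s, leO (Oset f) s (theta n) → s ≠ theta n → f s = false) : IsMonotoneSubtype f :=
  ⟨h0, isSubtype_iff.2 ⟨fun _ hs => Bool.le_iff_imp.1 (hmono _ _ hs) h0, h⟩, hmono⟩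

lemma sup (hf : IsMonotoneSubtype f) (hg : IsMonotoneSubtype g) (hO : Oset f = Oset g) :
    IsMonotoneSubtype (f ⊔ g) := by
  have hOsup : Oset (f ⊔ g) = Oset f := by rw [Oset_sup, hO, Set.union_self]
  refine of_monotoneF (Bool.le_iff_imp.1 le_sup_left hf.mem_Fcal) (fun s t hst => ?_)
    (fun s hs hne => ?_)
  · rw [hOsup] at hst
    exact sup_le_sup (hf.monotoneF s t hst) (hg.monotoneF s t (hO ▸ hst))
  · rw [hOsup] at hs
    simp [hf.eq_false_of_leO_theta hs hne, hg.eq_false_of_leO_theta (hO ▸ hs) hne]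

lemma inf (hf : IsMonotoneSubtype f) (hg : IsMonotoneSubtype g) (hO : Oset f = Oset g) :
    IsMonotoneSubtype (f ⊓ g) := by
  have hOinf : Oset (f ⊓ g) = Oset f := by rw [Oset_inf, hO, Set.inter_self]
  have hf0 : f (theta n) = true := hf.mem_Fcal
  have hg0 : g (theta n) = true := hg.mem_Fcal
  refine of_monotoneF (by simp [Fcal, hf0, hg0]) (fun s t hst => ?_) (fun s hs hne => ?_)
  · rw [hOinf] at hst
    exact inf_le_inf (hf.monotoneF s t hst) (hg.monotoneF s t (hO ▸ hst))
  · rw [hOinf] at hs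
    simp [hf.eq_false_of_leO_theta hs hne]

lemma permComp (hf : IsMonotoneSubtype f) (σ : Equiv.Perm (Fin n)) :
    IsMonotoneSubtype (permComp f σ) := by
  refine of_monotoneF hf.mem_Fcal (fun s t hst => ?_) (fun s hs hne => ?_)
  · rw [Oset_permComp, ← leO_permAct_iff] at hst
    exact hf.monotoneF _ _ hst
  · rw [Oset_permComp, ← leO_permAct_iff] at hs
    exact hf.eq_false_of_leO_theta hs (permAct_eq_theta_iff.not.2 hne)

lemma star (hf : IsMonotoneSubtype f) : IsMonotoneSubtype (star f) := by
  refine of_monotoneF (if_pos rfl) (fun s t hst => ?_) (fun s hs hne => ?_)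
  · rw [Oset_star, leO_compl_iff] at hst
    by_cases ht : t = theta n
    · simp [HOT.star, ht]
    by_cases hs : s = theta n
    · subst hs
      simp [HOT.star, ht, hf.eq_false_of_leO_theta hst ht]
    · simp only [HOT.star, hs, ht, if_false]
      exact compl_le_compl (hf.monotoneF t s hst)
  · rw [Oset_star, leO_compl_iff] at hs
    simp [HOT.star, hne, hf.eq_true_of_theta_leO hs]

end Unary

section Binary

variable {f : Str m → Bool} {g : Str n → Bool}

lemma tensor (hf : IsMonotoneSubtype f) (hg : IsMonotoneSubtype g) :
    IsMonotoneSubtype (tensor f g) := by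
  have hf0 : f (theta m) = true := hf.mem_Fcal
  have hg0 : g (theta n) = true := hg.mem_Fcal
  refine of_monotoneF (by simp [Fcal, HOT.tensor, fstStr_theta, sndStr_theta, hf0, hg0])
    (fun s t hst => ?_) (fun s hs hne => ?_)
  · obtain ⟨h1, h2⟩ := (leO_Oset_tensor_iff hf.mem_Fcal hg.mem_Fcal).1 hst
    exact inf_le_inf (hf.monotoneF _ _ h1) (hg.monotoneF _ _ h2)
  · obtain ⟨h1, h2⟩ := (leO_Oset_tensor_iff hf.mem_Fcal hg.mem_Fcal).1 hs
    rcases not_and_or.1 (eq_theta_iff_fstStr_sndStr.not.1 hne) with h | h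
    · simp [HOT.tensor, hf.eq_false_of_leO_theta h1 h]
    · simp [HOT.tensor, hg.eq_false_of_leO_theta h2 h]

lemma causalL (hf : IsMonotoneSubtype f) (hg : IsMonotoneSubtype g) :
    IsMonotoneSubtype (causalL f g) := by
  have hg0 : g (theta n) = true := hg.mem_Fcal
  refine of_monotoneF (by simp [Fcal, HOT.causalL, fstStr_theta, sndStr_theta, hg0])
    (fun s t hst => ?_) (fun s hs hne => ?_)
  · obtain ⟨h1, h2⟩ := leO_Oset_causalL_iff.1 hst
    simp only [HOT.causalL]
    by_cases hs1 : fstStr s = theta m <;> by_cases ht1 : fstStr t = theta m <;>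
      simp only [hs1, ht1, if_true, if_false]
    · exact hg.monotoneF _ _ h2
    · rw [hs1] at h1
      simp [hf.eq_true_of_theta_leO h1]
    · rw [ht1] at h1
      simp [hf.eq_false_of_leO_theta h1 hs1]
    · exact hf.monotoneF _ _ h1
  · obtain ⟨h1, h2⟩ := leO_Oset_causalL_iff.1 hs
    by_cases hs1 : fstStr s = theta m
    · have hs2 : sndStr s ≠ theta n := fun h => hne (eq_theta_iff_fstStr_sndStr.2 ⟨hs1, h⟩)
      simp [HOT.causalL, hs1, hg.eq_false_of_leO_theta h2 hs2]
    · simp [HOT.causalL, hs1, hf.eq_false_of_leO_theta h1 hs1]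

lemma parr (hf : IsMonotoneSubtype f) (hg : IsMonotoneSubtype g) :
    IsMonotoneSubtype (parr f g) :=
  (hf.star.tensor hg.star).star

end Binary

lemma isSubtype_and_monotoneF {f : Str n → Bool} (hf : IsMonotoneSubtype f) :
    IsSubtype f ∧ MonotoneF f :=
  ⟨hf.isSubtype, hf.monotoneF⟩

end IsMonotoneSubtype

/-- (a) monotone subtypes with equal output sets are closed under `∨`, `∧`;
(b) monotone subtypes are closed under permutations, complement, causal product,
tensor product and `⅋`. -/
theorem stmt9 :
    (∀ (n : ℕ) (f g : Str n → Bool), f ∈ Fcal n → g ∈ Fcal n →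
      IsSubtype f → MonotoneF f → IsSubtype g → MonotoneF g → Oset f = Oset g →
      (IsSubtype (f ⊔ g) ∧ MonotoneF (f ⊔ g)) ∧
      (IsSubtype (f ⊓ g) ∧ MonotoneF (f ⊓ g))) ∧
    (∀ (m n : ℕ) (f : Str m → Bool) (g : Str n → Bool), f ∈ Fcal m → g ∈ Fcal n →
      IsSubtype f → MonotoneF f → IsSubtype g → MonotoneF g →
      ∀ σ : Equiv.Perm (Fin m),
      (IsSubtype (permComp f σ) ∧ MonotoneF (permComp f σ)) ∧
      (IsSubtype (star f) ∧ MonotoneF (star f)) ∧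
      (IsSubtype (causalL f g) ∧ MonotoneF (causalL f g)) ∧
      (IsSubtype (tensor f g) ∧ MonotoneF (tensor f g)) ∧
      (IsSubtype (parr f g) ∧ MonotoneF (parr f g))) := by
  refine ⟨fun n f g hf0 hg0 hsf hmf hsg hmg hO => ?_,
    fun m n f g hf0 hg0 hsf hmf hsg hmg σ => ?_⟩
  · have hf : IsMonotoneSubtype f := ⟨hf0, hsf, hmf⟩
    have hg : IsMonotoneSubtype g := ⟨hg0, hsg, hmg⟩
    exact ⟨(hf.sup hg hO).isSubtype_and_monotoneF, (hf.inf hg hO).isSubtype_and_monotoneF⟩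
  · have hf : IsMonotoneSubtype f := ⟨hf0, hsf, hmf⟩
    have hg : IsMonotoneSubtype g := ⟨hg0, hsg, hmg⟩
    exact ⟨(hf.permComp σ).isSubtype_and_monotoneF, hf.star.isSubtype_and_monotoneF,
      (hf.causalL hg).isSubtype_and_monotoneF, (hf.tensor hg).isSubtype_and_monotoneF,
      (hf.parr hg).isSubtype_and_monotoneF⟩

end HOT
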